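/- arXiv:math/0412281 — 2 statements merged into one kernel-verified Lean document; each statement's English description precedes it below -/
import Mathlib

section
/- Let k be a field of characteristic zero and let 𝔤 be a finite-dimensional Lie algebra over k whose Killing form κ is nondegenerate (equivalently, 𝔤 is semisimple). Let c : 𝔤 × 𝔤 → k be an alternating bilinear map satisfying the 2-cocycle identity c([X,Y],Z) + c([Y,Z],X) + c([Z,X],Y) = 0 for all X, Y, Z ∈ 𝔤. Then there exists a unique element Z_c ∈ 𝔤 such that c(X,Y) = κ(Z_c, [X,Y]) for all X, Y ∈ 𝔤. -/
/-!
Since `κ` is nondegenerate, `c X Y = κ(D X, Y)` for a unique linear map `D`. Invariance of `κ`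
turns the cocycle identity for `c` into the Leibniz rule for `D`, so `D` is a derivation, and
every derivation of a Lie algebra with nondegenerate Killing form is inner: `D = ad Z`. Then
`c X Y = κ(⁅Z, X⁆, Y) = κ(Z, ⁅X, Y⁆)`. Uniqueness holds because `κ(Z, ⁅X, Y⁆) = κ(⁅Z, X⁆, Y)`
vanishing for all `X, Y` puts `Z` in the centre, which is trivial.
-/

namespace LieAlgebra

variable {k L : Type*} [Field k] [LieRing L] [LieAlgebra k L]

lemma isKilling_of_killingForm_nondegenerate [Module.Finite k L]
    (hκ : (killingForm k L).Nondegenerate) : IsKilling k L where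
  killingCompl_top_eq_bot := by
    refine (LieSubmodule.eq_bot_iff _).mpr fun x hx ↦ hκ.1 x fun y ↦ ?_
    rw [LieModule.traceForm_comm]
    exact (LieIdeal.mem_killingCompl k L ⊤).mp hx y (LieSubmodule.mem_top y)

lemma exists_lieDerivation_bilinForm_apply_eq [FiniteDimensional k L]
    {B : LinearMap.BilinForm k L} (hB : B.Nondegenerate)
    (hinv : ∀ x y z : L, B ⁅x, y⁆ z = B x ⁅y, z⁆)
    {c : L →ₗ[k] L →ₗ[k] k} (halt : c.IsAlt)
    (hcocycle : ∀ x y z : L, c ⁅x, y⁆ z + c ⁅y, z⁆ x + c ⁅z, x⁆ y = 0) :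
    ∃ D : LieDerivation k L L, ∀ x y : L, B (D x) y = c x y := by
  let D : L →ₗ[k] L := (B.toDual hB).symm.toLinearMap ∘ₗ c
  have hD : ∀ x y : L, B (D x) y = c x y := fun x y ↦
    LinearMap.BilinForm.apply_toDual_symm_apply (hB := hB) (c x) y
  have hD_lie : ∀ a x z : L, B ⁅a, D x⁆ z = -c x ⁅a, z⁆ := fun a x z ↦ by
    rw [← lie_skew, map_neg, LinearMap.neg_apply, hinv, hD]
  refine ⟨⟨D, fun a b ↦ (B.toDual hB).injective (LinearMap.ext fun z ↦ ?_)⟩, hD⟩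
  simp only [LinearMap.BilinForm.toDual_def, map_sub, LinearMap.sub_apply, hD, hD_lie]
  have := hcocycle a b z
  rw [← halt.neg a ⁅b, z⁆, ← halt.neg b ⁅z, a⁆, ← lie_skew z a, map_neg] at this
  linear_combination this

lemma IsKilling.eq_of_forall_killingForm_lie_eq [Module.Finite k L] [IsKilling k L] {x x' : L}
    (h : ∀ y z : L, killingForm k L x ⁅y, z⁆ = killingForm k L x' ⁅y, z⁆) : x = x' := by
  have hx : ∀ y : L, ⁅x - x', y⁆ = 0 := fun y ↦ (IsKilling.killingForm_nondegenerate k L).1 _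
    fun z ↦ by rw [LieModule.traceForm_apply_lie_apply, map_sub, LinearMap.sub_apply, h, sub_self]
  have hx_center : x - x' ∈ center k L := (LieModule.mem_maxTrivSubmodule k L L _).mpr fun y ↦ by
    rw [← lie_skew, hx, neg_zero]
  rwa [center_eq_bot, LieSubmodule.mem_bot, sub_eq_zero] at hx_center

end LieAlgebra

theorem algebraic_representative_exists_unique_general
    (k : Type*) [Field k]
    (L : Type*) [LieRing L] [LieAlgebra k L] [Module.Finite k L]
    (hκ : (killingForm k L).Nondegenerate)
    (c : L →ₗ[k] L →ₗ[k] k)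
    (halt : ∀ X : L, c X X = 0)
    (hcocycle : ∀ X Y Z : L, c ⁅X, Y⁆ Z + c ⁅Y, Z⁆ X + c ⁅Z, X⁆ Y = 0) :
    ∃! Zc : L, ∀ X Y : L, c X Y = killingForm k L Zc ⁅X, Y⁆ := by
  have := LieAlgebra.isKilling_of_killingForm_nondegenerate hκ
  obtain ⟨D, hD⟩ := LieAlgebra.exists_lieDerivation_bilinForm_apply_eq hκ
    (LieModule.traceForm_apply_lie_apply k L L) halt hcocycle
  obtain ⟨Z, rfl⟩ := LieDerivation.IsKilling.exists_eq_ad D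
  have hZ : ∀ X Y : L, c X Y = killingForm k L Z ⁅X, Y⁆ := fun X Y ↦ by
    rw [← hD, LieDerivation.ad_apply_apply, LieModule.traceForm_apply_lie_apply]
  exact ⟨Z, hZ, fun Z' hZ' ↦ LieAlgebra.IsKilling.eq_of_forall_killingForm_lie_eq fun X Y ↦ by
    rw [← hZ, ← hZ']⟩

/-- Let `k` be a field of characteristic zero and `L` a finite-dimensional Lie algebra over
`k` whose Killing form is nondegenerate.  For every alternating bilinear 2-cocycle
`c : L × L → k` there exists a unique `Zc ∈ L` with `c X Y = κ(Zc, ⁅X, Y⁆)` for all `X, Y`. -/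
theorem algebraic_representative_exists_unique
    (k : Type*) [Field k] [CharZero k]
    (L : Type*) [LieRing L] [LieAlgebra k L] [Module.Finite k L]
    (hκ : (killingForm k L).Nondegenerate)
    (c : L →ₗ[k] L →ₗ[k] k)
    (halt : ∀ X : L, c X X = 0)
    (hcocycle : ∀ X Y Z : L, c ⁅X, Y⁆ Z + c ⁅Y, Z⁆ X + c ⁅Z, X⁆ Y = 0) :
    ∃! Zc : L, ∀ X Y : L, c X Y = killingForm k L Zc ⁅X, Y⁆ :=
  algebraic_representative_exists_unique_general k L hκ c halt hcocycle
end

section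
/- Let k be a field of characteristic zero and let 𝔤 be a finite-dimensional Lie algebra over k whose Killing form κ is nondegenerate. Let c : 𝔤 × 𝔤 → k be an alternating bilinear 2-cocycle, and let F : 𝔤 → 𝔤 be the unique linear map satisfying κ(F(X), Y) = c(X,Y) for all X, Y ∈ 𝔤 (which exists since κ is nondegenerate). Then F is a derivation of 𝔤, i.e. F([X,Y]) = [F(X), Y] + [X, F(Y)] for all X, Y ∈ 𝔤. -/
/-! Pairing the derivation defect `F ⁅X, Y⁆ - ⁅F X, Y⁆ - ⁅X, F Y⁆` with `Z` under an invariant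
form and moving the brackets across the form turns it into the cyclic sum
`c ⁅X, Y⁆ Z + c ⁅Y, Z⁆ X + c ⁅Z, X⁆ Y`, which vanishes for a cocycle; nondegeneracy then kills
the defect itself. -/

section InvariantForm

variable {R L : Type*} [CommRing R] [LieRing L] [Module R L]
  {B : LinearMap.BilinForm R L} {c : L →ₗ[R] L →ₗ[R] R} {F : L →ₗ[R] L}

theorem LinearMap.BilinForm.lieInvariant.apply_lie_map_left (hB : B.lieInvariant L)
    (hF : ∀ X Y, B (F X) Y = c X Y) (X Y Z : L) : B ⁅F X, Y⁆ Z = c X ⁅Y, Z⁆ := by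
  rw [← lie_skew, map_neg, LinearMap.neg_apply, hB, neg_neg, hF]

theorem LinearMap.BilinForm.lieInvariant.apply_lie_map_right (hB : B.lieInvariant L)
    (hF : ∀ X Y, B (F X) Y = c X Y) (X Y Z : L) : B ⁅X, F Y⁆ Z = -c Y ⁅X, Z⁆ := by
  rw [hB, hF]

theorem LinearMap.BilinForm.lieInvariant.apply_derivation_defect (hB : B.lieInvariant L)
    (hc : c.IsAlt) (hF : ∀ X Y, B (F X) Y = c X Y) (X Y Z : L) :
    B (F ⁅X, Y⁆ - ⁅F X, Y⁆ - ⁅X, F Y⁆) Z = c ⁅X, Y⁆ Z + c ⁅Y, Z⁆ X + c ⁅Z, X⁆ Y := by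
  rw [map_sub, map_sub, LinearMap.sub_apply, LinearMap.sub_apply, hF,
    hB.apply_lie_map_left hF, hB.apply_lie_map_right hF, ← hc.neg ⁅Y, Z⁆ X, hc.neg Y ⁅X, Z⁆,
    ← lie_skew Z X, map_neg, LinearMap.neg_apply]
  ring

end InvariantForm

theorem cocycle_representing_endomorphism_is_derivation_general
    (k : Type*) [Field k]
    (L : Type*) [LieRing L] [LieAlgebra k L] [Module.Finite k L]
    (hκ : (killingForm k L).Nondegenerate)
    (c : L →ₗ[k] L →ₗ[k] k)
    (halt : ∀ X : L, c X X = 0)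
    (hcocycle : ∀ X Y Z : L, c ⁅X, Y⁆ Z + c ⁅Y, Z⁆ X + c ⁅Z, X⁆ Y = 0)
    (F : L →ₗ[k] L)
    (hF : ∀ X Y : L, killingForm k L (F X) Y = c X Y) :
    ∀ X Y : L, F ⁅X, Y⁆ = ⁅F X, Y⁆ + ⁅X, F Y⁆ := by
  intro X Y
  rw [← sub_eq_zero, ← sub_sub]
  refine hκ.1 _ fun Z => ?_
  rw [(LieModule.traceForm_lieInvariant k L L).apply_derivation_defect halt hF, hcocycle]

/-- Let `k` be a field of characteristic zero and `L` a finite-dimensional Lie algebra over `k`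
whose Killing form `κ` is nondegenerate.  If `c` is an alternating bilinear 2-cocycle on `L` and
`F : L → L` is the unique linear map satisfying `κ(F X, Y) = c X Y` for all `X, Y`, then `F` is
a derivation of `L`. -/
theorem cocycle_representing_endomorphism_is_derivation
    (k : Type*) [Field k] [CharZero k]
    (L : Type*) [LieRing L] [LieAlgebra k L] [Module.Finite k L]
    (hκ : (killingForm k L).Nondegenerate)
    (c : L →ₗ[k] L →ₗ[k] k)
    (halt : ∀ X : L, c X X = 0)
    (hcocycle : ∀ X Y Z : L, c ⁅X, Y⁆ Z + c ⁅Y, Z⁆ X + c ⁅Z, X⁆ Y = 0)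
    (F : L →ₗ[k] L)
    (hF : ∀ X Y : L, killingForm k L (F X) Y = c X Y) :
    ∀ X Y : L, F ⁅X, Y⁆ = ⁅F X, Y⁆ + ⁅X, F Y⁆ :=
  cocycle_representing_endomorphism_is_derivation_general k L hκ c halt hcocycle F hF
end
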